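/- arXiv:math/0403412 — 8 statements merged into one kernel-verified Lean document; each statement's English description precedes it below -/
import Mathlib

section
/- Let ξ : E with F'(ξ) ≠ 0. Then Condition Bryuno holds at ξ if and only if Condition N holds at ξ. -/
set_option maxHeartbeats 1000000 in
set_option synthInstance.maxHeartbeats 400000 in
/-- For `ξ` with `F'(ξ) ≠ 0`, Condition Bryuno holds at `ξ` iff Condition N holds at `ξ`. -/
theorem bryuno_iff_N (d : ℕ) (hd : 1 ≤ d)
    (F : EuclideanSpace ℝ (Fin d) → ℝ) (hF : ContDiff ℝ 2 F)
    (ξ : EuclideanSpace ℝ (Fin d)) (hξ : fderiv ℝ F ξ ≠ 0) :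
    (∀ X Y : EuclideanSpace ℝ (Fin d),
        fderiv ℝ (fun η => fderiv ℝ F η) ξ X ∈ Submodule.span ℝ {fderiv ℝ F ξ} →
        fderiv ℝ (fun η => fderiv ℝ F η) ξ Y ∈ Submodule.span ℝ {fderiv ℝ F ξ} →
        ¬ LinearIndependent ℝ ![X, Y]) ↔
    (∀ X : EuclideanSpace ℝ (Fin d),
        fderiv ℝ F ξ X = 0 → fderiv ℝ (fun η => fderiv ℝ F η) ξ X = 0 → X = 0) := by
  set L : EuclideanSpace ℝ (Fin d) →L[ℝ] ℝ := fderiv ℝ F ξ with hLdef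
  set A : EuclideanSpace ℝ (Fin d) →L[ℝ] (EuclideanSpace ℝ (Fin d) →L[ℝ] ℝ) :=
    fderiv ℝ (fun η => fderiv ℝ F η) ξ with hAdef
  have hsymm : ∀ v w, A v w = A w v := (hF.contDiffAt.isSymmSndFDerivAt (by norm_num)).eq
  constructor
  · -- Bryuno → N
    intro hB X hLX hAX
    by_contra hX0
    -- evaluation at X on the dual
    let ev : (EuclideanSpace ℝ (Fin d) →L[ℝ] ℝ) →ₗ[ℝ] ℝ :=
      { toFun := fun g => g X
        map_add' := by intro g h; simp
        map_smul' := by intro c g; simp }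
    haveI : FiniteDimensional ℝ (EuclideanSpace ℝ (Fin d) →L[ℝ] ℝ) :=
      (LinearMap.toContinuousLinearMap :
        (EuclideanSpace ℝ (Fin d) →ₗ[ℝ] ℝ) ≃ₗ[ℝ]
          (EuclideanSpace ℝ (Fin d) →L[ℝ] ℝ)).finiteDimensional
    have hfr : Module.finrank ℝ (EuclideanSpace ℝ (Fin d) →L[ℝ] ℝ) = d := by
      rw [← (LinearMap.toContinuousLinearMap :
        (EuclideanSpace ℝ (Fin d) →ₗ[ℝ] ℝ) ≃ₗ[ℝ]
          (EuclideanSpace ℝ (Fin d) →L[ℝ] ℝ)).finrank_eq]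
      rw [Module.finrank_linearMap, finrank_euclideanSpace_fin, Module.finrank_self, mul_one]
    have hfrE : Module.finrank ℝ (EuclideanSpace ℝ (Fin d)) = d := finrank_euclideanSpace_fin
    -- ev is surjective
    obtain ⟨i, hi⟩ : ∃ i, X i ≠ 0 := by
      by_contra h
      push_neg at h
      exact hX0 (PiLp.ext fun j => by simp [h j])
    have hevsurj : Function.Surjective ev := by
      intro c
      refine ⟨(c / X i) • EuclideanSpace.proj i, ?_⟩
      simp only [ev, LinearMap.coe_mk, AddHom.coe_mk, ContinuousLinearMap.coe_smul',
        Pi.smul_apply, smul_eq_mul, PiLp.proj_apply]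
      field_simp
    set H := LinearMap.ker ev with hHdef
    have hHrank : Module.finrank ℝ H + 1 = d := by
      have h := LinearMap.finrank_range_add_finrank_ker ev
      rw [LinearMap.range_eq_top.2 hevsurj, finrank_top, Module.finrank_self, hfr] at h
      rw [hHdef]
      omega
    set S : Submodule ℝ (EuclideanSpace ℝ (Fin d) →L[ℝ] ℝ) := Submodule.span ℝ {L} with hSdef
    have hSrank : Module.finrank ℝ S = 1 := finrank_span_singleton hξ
    have hLH : L ∈ H := hLX
    have hSH : S ≤ H := by
      rw [hSdef, Submodule.span_le, Set.singleton_subset_iff]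
      exact hLH
    -- quotient map
    set Ψ : EuclideanSpace ℝ (Fin d) →ₗ[ℝ] ((EuclideanSpace ℝ (Fin d) →L[ℝ] ℝ) ⧸ S) :=
      S.mkQ ∘ₗ (A : EuclideanSpace ℝ (Fin d) →ₗ[ℝ] (EuclideanSpace ℝ (Fin d) →L[ℝ] ℝ))
      with hΨdef
    have hrange : LinearMap.range Ψ ≤ H.map S.mkQ := by
      rintro _ ⟨v, rfl⟩
      refine ⟨A v, ?_, rfl⟩
      show A v X = 0
      rw [hsymm v X, hAX]
      simp
    have hmaprank : Module.finrank ℝ (H.map S.mkQ) + 1 + 1 = d := by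
      have h1 := LinearMap.finrank_range_add_finrank_ker (K := ℝ) (V := H)
        (V₂ := (EuclideanSpace ℝ (Fin d) →L[ℝ] ℝ) ⧸ S) (S.mkQ ∘ₗ H.subtype)
      have h2 : LinearMap.range (S.mkQ ∘ₗ H.subtype) = H.map S.mkQ := by
        rw [LinearMap.range_comp, Submodule.range_subtype]
      have h3 : LinearMap.ker (S.mkQ ∘ₗ H.subtype) = S.comap H.subtype := by
        rw [LinearMap.ker_comp, Submodule.ker_mkQ]
      have h4 : Module.finrank ℝ (S.comap H.subtype) = 1 := by
        rw [← hSrank]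
        exact (Submodule.comapSubtypeEquivOfLe hSH).finrank_eq
      rw [h2, h3, h4] at h1
      omega
    have hkerrank : 2 ≤ Module.finrank ℝ (LinearMap.ker Ψ) := by
      have h1 := LinearMap.finrank_range_add_finrank_ker Ψ
      rw [hfrE] at h1
      have h2 : Module.finrank ℝ (LinearMap.range Ψ) ≤ Module.finrank ℝ (H.map S.mkQ) :=
        Submodule.finrank_mono hrange
      omega
    obtain ⟨Y, hYker, hYspan⟩ :
        ∃ Y ∈ LinearMap.ker Ψ, Y ∉ Submodule.span ℝ {X} := by
      by_contra h
      push_neg at h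
      have hle : LinearMap.ker Ψ ≤ Submodule.span ℝ {X} := h
      have := Submodule.finrank_mono hle
      rw [finrank_span_singleton hX0] at this
      omega
    have hAY : A Y ∈ S := by
      have h : S.mkQ (A Y) = 0 := hYker
      rwa [← LinearMap.mem_ker, Submodule.ker_mkQ] at h
    refine hB X Y (by rw [hAX]; exact S.zero_mem) hAY ?_
    rw [LinearIndependent.pair_iff]
    intro s t hst
    have ht : t = 0 := by
      by_contra ht
      apply hYspan
      rw [Submodule.mem_span_singleton]
      refine ⟨-s / t, ?_⟩
      have h : Y = (-s / t) • X := by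
        have h2 : t • Y = (-s) • X := by
          rw [neg_smul, eq_neg_iff_add_eq_zero, add_comm]; exact hst
        have := congrArg (fun v => (t⁻¹ : ℝ) • v) h2
        simpa [smul_smul, inv_mul_cancel₀ ht, div_eq_inv_mul, mul_comm] using this
      exact h.symm
    rw [ht, zero_smul, add_zero, smul_eq_zero] at hst
    exact ⟨hst.resolve_right hX0, ht⟩
  · -- N → Bryuno
    intro hN X Y hX hY hLI
    rw [Submodule.mem_span_singleton] at hX hY
    obtain ⟨a, ha⟩ := hX
    obtain ⟨b, hb⟩ := hY
    have hXne : X ≠ 0 := fun h => hLI.ne_zero 0 (by simpa using h)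
    have pair := LinearIndependent.pair_iff.1 hLI
    have hab : a * L Y = b * L X := by
      have h := hsymm X Y
      rw [← ha, ← hb] at h
      simpa [mul_comm] using h
    -- first: a = b = 0
    have hu : b • X + (-a) • Y = 0 := by
      apply hN
      · simp only [map_add, map_smul, smul_eq_mul]
        linarith [hab]
      · rw [map_add, map_smul, map_smul, ← ha, ← hb, smul_smul, smul_smul]
        module
    obtain ⟨hb0, ha0⟩ := pair b (-a) hu
    have ha0 : a = 0 := by linarith [neg_eq_zero.1 ha0]
    have hAX : A X = 0 := by rw [← ha, ha0, zero_smul]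
    have hAY : A Y = 0 := by rw [← hb, hb0, zero_smul]
    -- second: L X = L Y = 0
    have hv : (L Y) • X + (-(L X)) • Y = 0 := by
      apply hN
      · simp only [map_add, map_smul, smul_eq_mul]; ring
      · rw [map_add, map_smul, map_smul, hAX, hAY, smul_zero, smul_zero, add_zero]
    obtain ⟨hLY, hLX⟩ := pair _ _ hv
    have hLX : L X = 0 := by linarith [neg_eq_zero.1 hLX]
    exact hXne (hN X hLX hAX)
end

section
/- Let ξ : E with F'(ξ) ≠ 0. Then Condition Bryuno holds at ξ if and only if the linear map from E × ℝ to E →L[ℝ] ℝ sending (X, α) to F''(ξ) X + α • F'(ξ) is surjective. -/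
/-!
With `S := {X | F''(ξ) X ∈ ℝ ∙ F'(ξ)}`, Condition Bryuno says exactly `dim S ≤ 1`. The map
`(X, α) ↦ F''(ξ) X + α • F'(ξ)` is surjective iff `F''(ξ)` composed with the projection onto
`E* ⧸ ℝ ∙ F'(ξ)` is; that quotient has dimension `d - 1` and the composite has kernel `S`, so by
rank–nullity this happens iff `dim S ≤ 1`.
-/

open Module Submodule

section Field

variable {K V W : Type*} [Field K] [AddCommGroup V] [Module K V] [AddCommGroup W] [Module K W]
  [FiniteDimensional K V]

theorem Submodule.finrank_le_one_iff_forall_not_linearIndependent_pair (S : Submodule K V) :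
    finrank K S ≤ 1 ↔ ∀ x y, x ∈ S → y ∈ S → ¬ LinearIndependent K ![x, y] := by
  constructor
  · intro hS x y hx hy hxy
    have hpair : LinearIndependent K ![(⟨x, hx⟩ : S), ⟨y, hy⟩] :=
      .of_comp S.subtype (by convert hxy using 1; ext i; fin_cases i <;> rfl)
    have hcard := hpair.fintype_card_le_finrank
    rw [Fintype.card_fin] at hcard
    omega
  · intro h
    by_contra! hS
    obtain ⟨f, hf⟩ := exists_linearIndependent_of_le_finrank (Nat.succ_le_of_lt hS)
    refine h _ _ (f 0).2 (f 1).2 ?_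
    have hf_pair : ![(f 0 : V), f 1] = S.subtype ∘ f := by ext i; fin_cases i <;> rfl
    rw [hf_pair]
    exact hf.map' S.subtype S.ker_subtype

theorem LinearMap.surjective_iff_finrank_add_finrank_ker_le [FiniteDimensional K W]
    (f : V →ₗ[K] W) :
    Function.Surjective f ↔ finrank K W + finrank K (ker f) ≤ finrank K V := by
  rw [← f.finrank_range_add_finrank_ker, add_le_add_iff_right, ← range_eq_top]
  exact ⟨fun h => by rw [h, finrank_top],
    fun h => eq_top_of_finrank_eq (le_antisymm (finrank_le _) h)⟩

end Field

theorem surjective_add_smul_iff_surjective_mkQ_comp {R V W : Type*} [Ring R] [AddCommGroup V]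
    [Module R V] [AddCommGroup W] [Module R W] (A : V →ₗ[R] W) (v : W) :
    Function.Surjective (fun p : V × R => A p.1 + p.2 • v) ↔
      Function.Surjective ((span R {v}).mkQ ∘ₗ A) := by
  constructor
  · intro h w
    obtain ⟨w, rfl⟩ := (span R {v}).mkQ_surjective w
    obtain ⟨⟨X, α⟩, rfl⟩ := h w
    refine ⟨X, (Submodule.Quotient.eq _).mpr ?_⟩
    simpa using neg_mem (smul_mem _ α (mem_span_singleton_self v))
  · intro h w
    obtain ⟨X, hX⟩ := h ((span R {v}).mkQ w)
    obtain ⟨α, hα⟩ := mem_span_singleton.mp ((Submodule.Quotient.eq _).mp hX.symm)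
    exact ⟨(X, α), by simp [hα]⟩

theorem LinearMap.forall_not_linearIndependent_of_mem_span_iff_surjective_add_smul
    {K V W : Type*} [Field K] [AddCommGroup V] [Module K V] [AddCommGroup W] [Module K W]
    [FiniteDimensional K V] [FiniteDimensional K W] (hdim : finrank K W = finrank K V)
    (A : V →ₗ[K] W) {v : W} (hv : v ≠ 0) :
    (∀ X Y : V, A X ∈ span K {v} → A Y ∈ span K {v} → ¬ LinearIndependent K ![X, Y]) ↔
      Function.Surjective (fun p : V × K => A p.1 + p.2 • v) := by
  have hquot := (span K {v}).finrank_quotient_add_finrank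
  rw [finrank_span_singleton hv] at hquot
  rw [surjective_add_smul_iff_surjective_mkQ_comp, surjective_iff_finrank_add_finrank_ker_le,
    ker_comp, ker_mkQ, ← hdim, ← hquot, add_le_add_iff_left,
    finrank_le_one_iff_forall_not_linearIndependent_pair]
  rfl

theorem ContinuousLinearMap.finrank_strongDual {𝕜 E : Type*} [NontriviallyNormedField 𝕜]
    [CompleteSpace 𝕜] [NormedAddCommGroup E] [NormedSpace 𝕜 E] [FiniteDimensional 𝕜 E] :
    finrank 𝕜 (E →L[𝕜] 𝕜) = finrank 𝕜 E := by
  rw [← LinearMap.toContinuousLinearMap.finrank_eq, finrank_linearMap_self]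

theorem bryuno_iff_U_surjective_general (d : ℕ)
    (F : EuclideanSpace ℝ (Fin d) → ℝ)
    (ξ : EuclideanSpace ℝ (Fin d)) (hξ : fderiv ℝ F ξ ≠ 0) :
    (∀ X Y : EuclideanSpace ℝ (Fin d),
        fderiv ℝ (fun η => fderiv ℝ F η) ξ X ∈ Submodule.span ℝ {fderiv ℝ F ξ} →
        fderiv ℝ (fun η => fderiv ℝ F η) ξ Y ∈ Submodule.span ℝ {fderiv ℝ F ξ} →
        ¬ LinearIndependent ℝ ![X, Y]) ↔
    Function.Surjective (fun p : EuclideanSpace ℝ (Fin d) × ℝ =>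
        fderiv ℝ (fun η => fderiv ℝ F η) ξ p.1 + p.2 • fderiv ℝ F ξ) := by
  have hdim :
      finrank ℝ (EuclideanSpace ℝ (Fin d) →L[ℝ] ℝ) = finrank ℝ (EuclideanSpace ℝ (Fin d)) :=
    ContinuousLinearMap.finrank_strongDual
  exact LinearMap.forall_not_linearIndependent_of_mem_span_iff_surjective_add_smul hdim
    (fderiv ℝ (fun η => fderiv ℝ F η) ξ).toLinearMap hξ

/-- For `ξ` with `F'(ξ) ≠ 0`, Condition Bryuno holds at `ξ` iff the linear map
`(X, α) ↦ F''(ξ) X + α • F'(ξ)` from `E × ℝ` to `E →L[ℝ] ℝ` is surjective. -/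
theorem bryuno_iff_U_surjective (d : ℕ) (hd : 1 ≤ d)
    (F : EuclideanSpace ℝ (Fin d) → ℝ) (hF : ContDiff ℝ 2 F)
    (ξ : EuclideanSpace ℝ (Fin d)) (hξ : fderiv ℝ F ξ ≠ 0) :
    (∀ X Y : EuclideanSpace ℝ (Fin d),
        fderiv ℝ (fun η => fderiv ℝ F η) ξ X ∈ Submodule.span ℝ {fderiv ℝ F ξ} →
        fderiv ℝ (fun η => fderiv ℝ F η) ξ Y ∈ Submodule.span ℝ {fderiv ℝ F ξ} →
        ¬ LinearIndependent ℝ ![X, Y]) ↔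
    Function.Surjective (fun p : EuclideanSpace ℝ (Fin d) × ℝ =>
        fderiv ℝ (fun η => fderiv ℝ F η) ξ p.1 + p.2 • fderiv ℝ F ξ) :=
  bryuno_iff_U_surjective_general d F ξ hξ
end

section
/- If Condition N holds at a point ξ : E, then Condition Kolmogorov holds at ξ or Condition Iso-energetic holds at ξ. -/
namespace ContinuousLinearMap

variable {𝕜 E : Type*} [NontriviallyNormedField 𝕜] [NormedAddCommGroup E] [NormedSpace 𝕜 E]

/-- Writing `B Y = c • f`, symmetry gives `c * f X = B Y X = B X Y = 0`. -/
theorem apply_eq_zero_of_mem_span_singleton {B : E →L[𝕜] E →L[𝕜] 𝕜} {f : E →L[𝕜] 𝕜}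
    (hB : ∀ X Y, B X Y = B Y X) {X Y : E} (hBX : B X = 0) (hfX : f X ≠ 0)
    (hBY : B Y ∈ Submodule.span 𝕜 {f}) : B Y = 0 := by
  obtain ⟨c, hc⟩ := Submodule.mem_span_singleton.mp hBY
  have hc_mul : c * f X = 0 := by
    simpa [← hc, hBX] using hB Y X
  rw [← hc, (mul_eq_zero.mp hc_mul).resolve_right hfX, zero_smul]

theorem kolmogorov_or_isoenergetic_of_symm {B : E →L[𝕜] E →L[𝕜] 𝕜} {f : E →L[𝕜] 𝕜}
    (hB : ∀ X Y, B X Y = B Y X) (hN : ∀ X, f X = 0 → B X = 0 → X = 0) :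
    (∀ X, B X = 0 → X = 0) ∨ (∀ X, f X = 0 → B X ∈ Submodule.span 𝕜 {f} → X = 0) := by
  by_contra! h
  obtain ⟨⟨X, hBX, hX⟩, Y, hfY, hBY, hY⟩ := h
  have hfX : f X ≠ 0 := fun hfX => hX (hN X hfX hBX)
  exact hY (hN Y hfY (apply_eq_zero_of_mem_span_singleton hB hBX hfX hBY))

end ContinuousLinearMap

theorem N_implies_kolmogorov_or_isoenergetic_general (d : ℕ)
    (F : EuclideanSpace ℝ (Fin d) → ℝ) (hF : ContDiff ℝ 2 F)
    (ξ : EuclideanSpace ℝ (Fin d))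
    (hN : ∀ X : EuclideanSpace ℝ (Fin d),
        fderiv ℝ F ξ X = 0 → fderiv ℝ (fun η => fderiv ℝ F η) ξ X = 0 → X = 0) :
    (∀ X : EuclideanSpace ℝ (Fin d),
        fderiv ℝ (fun η => fderiv ℝ F η) ξ X = 0 → X = 0) ∨
    (∀ X : EuclideanSpace ℝ (Fin d), fderiv ℝ F ξ X = 0 →
        fderiv ℝ (fun η => fderiv ℝ F η) ξ X ∈ Submodule.span ℝ {fderiv ℝ F ξ} → X = 0) :=
  ContinuousLinearMap.kolmogorov_or_isoenergetic_of_symm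
    (hF.contDiffAt.isSymmSndFDerivAt (by simp)) hN

/-- Condition N at `ξ` implies Condition Kolmogorov at `ξ` or Condition Iso-energetic at `ξ`. -/
theorem N_implies_kolmogorov_or_isoenergetic (d : ℕ) (hd : 1 ≤ d)
    (F : EuclideanSpace ℝ (Fin d) → ℝ) (hF : ContDiff ℝ 2 F)
    (ξ : EuclideanSpace ℝ (Fin d))
    (hN : ∀ X : EuclideanSpace ℝ (Fin d),
        fderiv ℝ F ξ X = 0 → fderiv ℝ (fun η => fderiv ℝ F η) ξ X = 0 → X = 0) :
    (∀ X : EuclideanSpace ℝ (Fin d),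
        fderiv ℝ (fun η => fderiv ℝ F η) ξ X = 0 → X = 0) ∨
    (∀ X : EuclideanSpace ℝ (Fin d), fderiv ℝ F ξ X = 0 →
        fderiv ℝ (fun η => fderiv ℝ F η) ξ X ∈ Submodule.span ℝ {fderiv ℝ F ξ} → X = 0) :=
  N_implies_kolmogorov_or_isoenergetic_general d F hF ξ hN
end

section
/- Let B ⊆ E be open and suppose Condition N holds at every ξ ∈ B. Then for every nonzero X : E, the resonant set Σ_X = {ξ ∈ B | F'(ξ) X = 0} has empty interior. (Condition Weak implies Condition Rüssmann.) -/
/-- If Condition N (Condition Weak) holds at every point of an open set `B`, then for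
every nonzero `X` the resonant set `Σ_X = {ξ ∈ B | F'(ξ) X = 0}` has empty interior
(Condition Weak implies Condition Rüssmann). -/
theorem weak_implies_russmann (d : ℕ) (hd : 1 ≤ d)
    (F : EuclideanSpace ℝ (Fin d) → ℝ) (hF : ContDiff ℝ 2 F)
    (B : Set (EuclideanSpace ℝ (Fin d))) (hB : IsOpen B)
    (hN : ∀ ξ ∈ B, ∀ X : EuclideanSpace ℝ (Fin d),
        fderiv ℝ F ξ X = 0 → fderiv ℝ (fun η => fderiv ℝ F η) ξ X = 0 → X = 0) :
    ∀ X : EuclideanSpace ℝ (Fin d), X ≠ 0 →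
        interior {ξ ∈ B | fderiv ℝ F ξ X = 0} = ∅ := by
  intro X hX
  by_contra h
  obtain ⟨ξ, hξ⟩ := Set.nonempty_iff_ne_empty.mpr h
  have hξmem : ξ ∈ {ξ ∈ B | fderiv ℝ F ξ X = 0} := interior_subset hξ
  have hξB : ξ ∈ B := hξmem.1
  -- g η = fderiv F η X vanishes on a neighborhood of ξ
  have hnhds : {η | η ∈ B ∧ fderiv ℝ F η X = 0} ∈ nhds ξ :=
    mem_interior_iff_mem_nhds.mp hξ
  have hev : (fun η => fderiv ℝ F η X) =ᶠ[nhds ξ] fun _ => (0 : ℝ) :=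
    Filter.eventually_of_mem hnhds fun η hη => hη.2
  -- fderiv of F is differentiable
  have hdiff : DifferentiableAt ℝ (fun η => fderiv ℝ F η) ξ :=
    (hF.fderiv_right (m := 1) (by norm_num)).differentiable one_ne_zero ξ
  -- fderiv of η ↦ fderiv F η X at ξ
  have hcomp : HasFDerivAt (fun η => fderiv ℝ F η X)
      ((ContinuousLinearMap.apply ℝ ℝ X).comp
        (fderiv ℝ (fun η => fderiv ℝ F η) ξ)) ξ :=
    (ContinuousLinearMap.apply ℝ ℝ X).hasFDerivAt.comp ξ hdiff.hasFDerivAt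
  have hzero : HasFDerivAt (fun η => fderiv ℝ F η X)
      (0 : EuclideanSpace ℝ (Fin d) →L[ℝ] ℝ) ξ := by
    exact (hasFDerivAt_const (𝕜 := ℝ) (0 : ℝ) ξ).congr_of_eventuallyEq hev
  have heq := hcomp.unique hzero
  -- so fderiv (fderiv F) ξ Y X = 0 for all Y
  have hYX : ∀ Y, fderiv ℝ (fun η => fderiv ℝ F η) ξ Y X = 0 := by
    intro Y
    have := congrArg (fun L => L Y) heq
    simpa using this
  -- symmetry of second derivative
  have hsymm := (hF.contDiffAt (x := ξ)).isSymmSndFDerivAt (by norm_num)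
  have hXzero : fderiv ℝ (fun η => fderiv ℝ F η) ξ X = 0 := by
    ext Y
    simpa [hsymm X Y] using hYX Y
  exact hX (hN ξ hξB X hξmem.2 hXzero)
end

section
/- Let B ⊆ E be open and suppose that for every nonzero integer vector k : Fin d → ℤ, the set {ξ ∈ B | F'(ξ) (fun i => (k i : ℝ)) = 0} has empty interior (Condition Rüssmann over the integer lattice). Let A : E × E → ℝ satisfy ContDiff ℝ 1 A, be ℤ^d-periodic in the first variable (i.e. A (x + (fun i => (m i : ℝ)), ξ) = A (x, ξ) for all m : Fin d → ℤ and all x ξ : E), and Poisson-commute with the Hamiltonian H(x,ξ) = F(ξ), i.e. for all x : E and all ξ ∈ B, fderiv ℝ (fun y => A (y, ξ)) x (gradient F ξ) = 0. Then A is constant along the fibers: A (x, ξ) = A (y, ξ) for all x y : E and all ξ ∈ B. -/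
/-!
Fix `ξ` with `ω = ∇F(ξ)` nonresonant, i.e. `⟪ω, k⟫ ≠ 0` for every nonzero `k ∈ ℤ^d`. The periods of
the continuous function `v ↦ A (v, ξ)` form a closed subgroup containing `ℤ^d` and, by the commuting
hypothesis, the whole line `ℝ ω`. Such a subgroup is everything (Kronecker): otherwise its largest
linear subspace `W` is proper, its part in `Wᗮ` is a lattice there, and a nonzero vector of the dual
lattice is an integer vector orthogonal to `ω`. Rüssmann's condition makes the resonant sets
`{F' ξ k = 0}` nowhere dense in `B`, so by Baire the nonresonant `ξ` are dense in `B`, and the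
identity `A (x, ξ) = A (y, ξ)` extends to all of `B` by continuity.
-/

open Filter Topology Set Submodule
open scoped InnerProductSpace

theorem ZLattice.exists_ne_zero_forall_inner_mem_int {V : Type*} [NormedAddCommGroup V]
    [InnerProductSpace ℝ V] [FiniteDimensional ℝ V] [Nontrivial V]
    (L : Submodule ℤ V) [DiscreteTopology L] [IsZLattice ℝ L] :
    ∃ y : V, y ≠ 0 ∧ ∀ v ∈ L, ∃ n : ℤ, ⟪y, v⟫_ℝ = n := by
  have := ZLattice.module_free ℝ L
  have := ZLattice.module_finite ℝ L
  let b := Module.Free.chooseBasis ℤ L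
  let bV := b.ofZLatticeBasis ℝ L
  obtain ⟨i⟩ := bV.index_nonempty
  let y := (InnerProductSpace.toDual ℝ V).symm (bV.coord i).toContinuousLinearMap
  have inner_y (v : V) : ⟪y, v⟫_ℝ = bV.repr v i := InnerProductSpace.toDual_symm_apply
  refine ⟨y, fun hy => ?_, fun v hv => ⟨b.repr ⟨v, hv⟩ i, ?_⟩⟩
  · simpa [hy] using inner_y (bV i)
  · rw [inner_y]
    exact Module.Basis.ofZLatticeBasis_repr_apply ℝ L b ⟨v, hv⟩ i

/-- The largest `R`-submodule contained in `D`. -/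
def AddSubgroup.linearPart (R : Type*) {V : Type*} [Semiring R] [AddCommGroup V] [Module R V]
    (D : AddSubgroup V) : Submodule R V where
  carrier := {v | ∀ t : R, t • v ∈ D}
  add_mem' ha hb t := by simpa only [smul_add] using D.add_mem (ha t) (hb t)
  zero_mem' t := by simpa only [smul_zero] using D.zero_mem
  smul_mem' c v hv t := by simpa only [smul_smul] using hv (t * c)

namespace AddSubgroup

variable {R V : Type*} [Semiring R] [AddCommGroup V] [Module R V] {D : AddSubgroup V}

theorem mem_linearPart {v : V} : v ∈ D.linearPart R ↔ ∀ t : R, t • v ∈ D := Iff.rfl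

theorem mem_of_mem_linearPart {v : V} (hv : v ∈ D.linearPart R) : v ∈ D := by
  simpa using hv 1

end AddSubgroup

theorem tendsto_floor_div_mul {r : ℕ → ℝ} (hr0 : ∀ n, 0 < r n) (hr : Tendsto r atTop (𝓝 0))
    (t : ℝ) : Tendsto (fun n => (⌊t / r n⌋ : ℝ) * r n) atTop (𝓝 t) := by
  refine tendsto_of_tendsto_of_tendsto_of_le_of_le (by simpa using tendsto_const_nhds.sub hr)
    tendsto_const_nhds (fun n => ?_) (fun n => ?_)
  · calc t - r n = (t / r n - 1) * r n := by field_simp [(hr0 n).ne']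
      _ ≤ ⌊t / r n⌋ * r n := by
        gcongr
        · exact (hr0 n).le
        · linarith [Int.lt_floor_add_one (t / r n)]
  · calc ⌊t / r n⌋ * r n ≤ t / r n * r n := by gcongr; exacts [(hr0 n).le, Int.floor_le _]
      _ = t := div_mul_cancel₀ t (hr0 n).ne'

theorem AddSubgroup.mem_linearPart_of_tendsto {E : Type*} [TopologicalSpace E] [AddCommGroup E]
    [Module ℝ E] [ContinuousSMul ℝ E] {D : AddSubgroup E} (hD : IsClosed (D : Set E))
    {r : ℕ → ℝ} {u : ℕ → E} {u₀ : E} (hr0 : ∀ n, 0 < r n) (hr : Tendsto r atTop (𝓝 0))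
    (hu : Tendsto u atTop (𝓝 u₀)) (hmem : ∀ n, r n • u n ∈ D) : u₀ ∈ D.linearPart ℝ := by
  intro t
  refine hD.mem_of_tendsto ((tendsto_floor_div_mul hr0 hr t).smul hu) (.of_forall fun n => ?_)
  rw [mul_smul, Int.cast_smul_eq_zsmul]
  exact D.zsmul_mem (hmem n) _

theorem AddSubgroup.exists_pos_forall_mem_orthogonal_linearPart {V : Type*}
    [NormedAddCommGroup V] [InnerProductSpace ℝ V] [FiniteDimensional ℝ V]
    {D : AddSubgroup V} (hD : IsClosed (D : Set V)) :
    ∃ ε > 0, ∀ v ∈ D, v ∈ (D.linearPart ℝ)ᗮ → ‖v‖ < ε → v = 0 := by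
  set W := D.linearPart ℝ
  by_contra! h
  choose v hvD hvW hvε hv0 using fun n : ℕ => h (1 / (n + 1)) Nat.one_div_pos_of_nat
  have hr0 (n : ℕ) : 0 < ‖v n‖ := norm_pos_iff.mpr (hv0 n)
  have hr : Tendsto (‖v ·‖) atTop (𝓝 0) := squeeze_zero (fun n => norm_nonneg _)
    (fun n => (hvε n).le) tendsto_one_div_add_atTop_nhds_zero_nat
  have hu (n : ℕ) : ‖v n‖⁻¹ • v n ∈ Metric.sphere (0 : V) 1 := by
    simp [norm_smul, (hr0 n).ne']
  obtain ⟨u₀, hu₀, φ, hφ, hlim⟩ := (isCompact_sphere (0 : V) 1).tendsto_subseq hu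
  have hu₀W : u₀ ∈ W := mem_linearPart_of_tendsto hD (fun n => hr0 (φ n))
    (hr.comp hφ.tendsto_atTop) hlim (fun n => by simpa [smul_smul, (hr0 _).ne'] using hvD (φ n))
  have hu₀W' : u₀ ∈ Wᗮ := W.isClosed_orthogonal.mem_of_tendsto hlim
    (.of_forall fun n => Wᗮ.smul_mem _ (hvW (φ n)))
  have hu₀0 : u₀ = 0 := by simpa using W.inf_orthogonal_eq_bot.le ⟨hu₀W, hu₀W'⟩
  simp [hu₀0] at hu₀

theorem AddSubgroup.exists_mem_orthogonal_linearPart_inner_mem_int {V : Type*}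
    [NormedAddCommGroup V] [InnerProductSpace ℝ V] [FiniteDimensional ℝ V]
    {D : AddSubgroup V} (hD : IsClosed (D : Set V)) (hspan : span ℝ (D : Set V) = ⊤)
    (hW : D.linearPart ℝ ≠ ⊤) :
    ∃ y ∈ (D.linearPart ℝ)ᗮ, y ≠ 0 ∧ ∀ v ∈ D, ∃ n : ℤ, ⟪y, v⟫_ℝ = n := by
  -- `D ∩ Wᗮ` is discrete and contains the projection of `D` onto `Wᗮ`, so it is a lattice in `Wᗮ`.
  set W := D.linearPart ℝ
  set K := Wᗮ
  have : Nontrivial K :=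
    Submodule.nontrivial_iff_ne_bot.mpr fun h => hW (orthogonal_eq_bot_iff.mp h)
  set P := K.orthogonalProjectionOnto
  have hPD (v : V) (hv : v ∈ D) : (P v : V) ∈ D := by
    rw [← starProjection_apply, starProjection_orthogonal_val]
    exact D.sub_mem hv (mem_of_mem_linearPart (W.starProjection_apply_mem v))
  let L : Submodule ℤ K := D.toIntSubmodule.comap (K.subtype.restrictScalars ℤ)
  obtain ⟨ε, hε, hsmall⟩ := exists_pos_forall_mem_orthogonal_linearPart hD
  have : DiscreteTopology L := by
    refine discreteTopology_iff_isOpen_singleton_zero.mpr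
      ⟨Metric.ball 0 ε, Metric.isOpen_ball, ?_⟩
    ext x
    simp only [mem_preimage, Metric.mem_ball, dist_zero_right, mem_singleton_iff]
    refine ⟨fun hx => ?_, fun hx => by simpa [hx] using hε⟩
    exact Subtype.ext (Subtype.ext (hsmall _ x.2 x.1.2 hx))
  have : IsZLattice ℝ L := by
    refine ⟨eq_top_iff.mpr ?_⟩
    calc ⊤ = (span ℝ (D : Set V)).map (P : V →ₗ[ℝ] K) := by
          rw [hspan, Submodule.map_top, LinearMap.range_eq_top.mpr]
          exact fun x => ⟨x, orthogonalProjectionOnto_mem_subspace_eq_self x⟩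
      _ = span ℝ (P '' D) := map_span _ _
      _ ≤ span ℝ L := span_mono (image_subset_iff.mpr hPD)
  obtain ⟨y, hy0, hy⟩ := ZLattice.exists_ne_zero_forall_inner_mem_int L
  refine ⟨y, y.2, by simpa using hy0, fun v hv => ?_⟩
  obtain ⟨n, hn⟩ := hy (P v) (hPD v hv)
  exact ⟨n, by rwa [inner_orthogonalProjectionOnto_eq_of_mem_left] at hn⟩

theorem AddSubgroup.eq_top_of_nonresonant {ι : Type*} [Fintype ι]
    {D : AddSubgroup (EuclideanSpace ℝ ι)} (hD : IsClosed (D : Set (EuclideanSpace ℝ ι)))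
    (hlattice : ∀ m : ι → ℤ, WithLp.toLp 2 (fun i => (m i : ℝ)) ∈ D)
    {ω : EuclideanSpace ℝ ι} (hω : ∀ t : ℝ, t • ω ∈ D)
    (hres : ∀ k : ι → ℤ, k ≠ 0 → ⟪ω, WithLp.toLp 2 (fun i => (k i : ℝ))⟫_ℝ ≠ 0) : D = ⊤ := by
  classical
  have hsingle (i : ι) : EuclideanSpace.single i (1 : ℝ) ∈ D := by
    convert hlattice (Pi.single i 1) using 1
    ext j
    by_cases h : j = i <;> simp [h]
  have hspan : span ℝ (D : Set (EuclideanSpace ℝ ι)) = ⊤ :=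
    eq_top_iff.mpr <| (EuclideanSpace.basisFun ι ℝ).toBasis.span_eq.ge.trans <|
      span_mono <| range_subset_iff.mpr fun i => by simpa using hsingle i
  suffices hW : D.linearPart ℝ = ⊤ from
    eq_top_iff.mpr fun v _ => mem_of_mem_linearPart (hW ▸ Submodule.mem_top)
  by_contra hW
  obtain ⟨y, hyW, hy0, hy⟩ := exists_mem_orthogonal_linearPart_inner_mem_int hD hspan hW
  choose k hk using fun i => hy _ (hsingle i)
  have hyk : y = WithLp.toLp 2 (fun i => (k i : ℝ)) := by
    ext i
    simpa [EuclideanSpace.inner_single_right] using hk i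
  refine hres k (fun hk0 => hy0 (by ext i; simp [hyk, hk0])) ?_
  rw [← hyk]
  exact Submodule.inner_right_of_mem_orthogonal (mem_linearPart.mpr hω) hyW

def Function.periodSubgroup {G β : Type*} [AddCommGroup G] (g : G → β) : AddSubgroup G where
  carrier := {v | ∀ x, g (x + v) = g x}
  add_mem' ha hb x := by rw [← add_assoc, hb, ha]
  zero_mem' x := by rw [add_zero]
  neg_mem' {v} hv x := by rw [← hv (x + -v), neg_add_cancel_right]

theorem Function.isClosed_periodSubgroup {G β : Type*} [AddCommGroup G] [TopologicalSpace G]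
    [ContinuousAdd G] [TopologicalSpace β] [T2Space β] {g : G → β} (hg : Continuous g) :
    IsClosed (periodSubgroup g : Set G) := by
  change IsClosed {v | ∀ x, g (x + v) = g x}
  rw [ofPred_forall]
  exact isClosed_iInter fun x => isClosed_eq (by fun_prop) continuous_const

theorem Differentiable.add_smul_eq_of_fderiv_apply_eq_zero {E F : Type*} [NormedAddCommGroup E]
    [NormedSpace ℝ E] [NormedAddCommGroup F] [NormedSpace ℝ F] {g : E → F}
    (hg : Differentiable ℝ g) {v : E} (hv : ∀ x, fderiv ℝ g x v = 0) (x : E) (t : ℝ) :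
    g (x + t • v) = g x := by
  have hderiv (s : ℝ) : HasDerivAt (fun s : ℝ => g (x + s • v)) 0 s := by
    have := (hg _).hasFDerivAt.comp_hasDerivAt s (((hasDerivAt_id s).smul_const v).const_add x)
    simpa [hv, Function.comp_def] using this
  simpa using is_const_of_deriv_eq_zero (fun s => (hderiv s).differentiableAt)
    (fun s => (hderiv s).deriv) t 0

theorem IsOpen.isNowhereDense_inter {X : Type*} [TopologicalSpace X] {U C : Set X}
    (hU : IsOpen U) (hC : IsClosed C) (h : interior (U ∩ C) = ∅) : IsNowhereDense (U ∩ C) := by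
  rw [isNowhereDense_iff_disjoint, disjoint_iff_inter_eq_empty, ← subset_empty_iff, ← h]
  rintro p ⟨⟨hpU, -⟩, hp⟩
  refine interior_maximal ?_ (hU.inter isOpen_interior) ⟨hpU, hp⟩
  rintro q ⟨hqU, hq⟩
  exact ⟨hqU, closure_minimal inter_subset_right hC (interior_subset hq)⟩

theorem IsOpen.subset_closure_diff_iUnion {X ι : Type*} [TopologicalSpace X] [BaireSpace X]
    [Countable ι] {U : Set X} {C : ι → Set X} (hU : IsOpen U) (hC : ∀ i, IsClosed (C i))
    (h : ∀ i, interior (U ∩ C i) = ∅) : U ⊆ closure (U \ ⋃ i, C i) := by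
  have hM : IsMeagre (⋃ i, U ∩ C i) :=
    isMeagre_iUnion fun i => (hU.isNowhereDense_inter (hC i) (h i)).isMeagre
  convert (dense_of_mem_residual hM).open_subset_closure_inter hU using 2
  ext p
  simp +contextual

theorem apply_eq_of_periodic_of_nonresonant {ι β : Type*} [Fintype ι] [TopologicalSpace β]
    [T2Space β] {g : EuclideanSpace ℝ ι → β} (hg : Continuous g)
    (hper : ∀ m : ι → ℤ, ∀ x, g (x + WithLp.toLp 2 (fun i => (m i : ℝ))) = g x)
    {ω : EuclideanSpace ℝ ι} (hω : ∀ t : ℝ, ∀ x, g (x + t • ω) = g x)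
    (hres : ∀ k : ι → ℤ, k ≠ 0 → ⟪ω, WithLp.toLp 2 (fun i => (k i : ℝ))⟫_ℝ ≠ 0)
    (x y : EuclideanSpace ℝ ι) :
    g x = g y := by
  have hD : Function.periodSubgroup g = ⊤ :=
    AddSubgroup.eq_top_of_nonresonant (Function.isClosed_periodSubgroup hg) hper hω hres
  simpa using (hD ▸ AddSubgroup.mem_top (x - y) : x - y ∈ Function.periodSubgroup g) y

theorem commuting_implies_constant_on_fibers_general (d : ℕ)
    (F : EuclideanSpace ℝ (Fin d) → ℝ) (hF : ContDiff ℝ 1 F)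
    (B : Set (EuclideanSpace ℝ (Fin d))) (hB : IsOpen B)
    (hruss : ∀ k : Fin d → ℤ, k ≠ 0 →
        interior {ξ ∈ B | fderiv ℝ F ξ (WithLp.toLp 2 (fun i => (k i : ℝ))) = 0} = ∅)
    (A : EuclideanSpace ℝ (Fin d) × EuclideanSpace ℝ (Fin d) → ℝ)
    (hA : ContDiff ℝ 1 A)
    (hper : ∀ m : Fin d → ℤ, ∀ x ξ : EuclideanSpace ℝ (Fin d),
        A (x + (show EuclideanSpace ℝ (Fin d) from WithLp.toLp 2 (fun i => (m i : ℝ))), ξ) = A (x, ξ))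
    (hcomm : ∀ x : EuclideanSpace ℝ (Fin d), ∀ ξ ∈ B,
        fderiv ℝ (fun y => A (y, ξ)) x (gradient F ξ) = 0) :
    ∀ x y : EuclideanSpace ℝ (Fin d), ∀ ξ ∈ B, A (x, ξ) = A (y, ξ) := by
  have hAcont : Continuous A := hA.continuous
  have hAdiff : Differentiable ℝ A := hA.differentiable one_ne_zero
  have hfiber (ξ : EuclideanSpace ℝ (Fin d)) (hξ : ξ ∈ B) (hres : ∀ k : Fin d → ℤ, k ≠ 0 →
      fderiv ℝ F ξ (WithLp.toLp 2 (fun i => (k i : ℝ))) ≠ 0) (x y : EuclideanSpace ℝ (Fin d)) :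
      A (x, ξ) = A (y, ξ) := by
    refine apply_eq_of_periodic_of_nonresonant (g := fun v => A (v, ξ)) (ω := gradient F ξ)
      (by fun_prop) (fun m x => hper m x ξ) (fun t x => ?_) (fun k hk => ?_) x y
    · exact (hAdiff.comp (by fun_prop)).add_smul_eq_of_fderiv_apply_eq_zero
        (fun z => hcomm z ξ hξ) x t
    · rw [gradient, InnerProductSpace.toDual_symm_apply]
      exact hres k hk
  intro x y ξ hξ
  have hC (k : Fin d → ℤ) :
      IsClosed {ξ | fderiv ℝ F ξ (WithLp.toLp 2 (fun i => (k i : ℝ))) = 0} :=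
    isClosed_eq ((hF.continuous_fderiv one_ne_zero).clm_apply continuous_const) continuous_const
  have hclosed : IsClosed {ξ | A (x, ξ) = A (y, ξ)} := isClosed_eq (by fun_prop) (by fun_prop)
  refine hclosed.closure_subset_iff.mpr ?_ <|
    hB.subset_closure_diff_iUnion (fun k : {k : Fin d → ℤ // k ≠ 0} => hC k)
      (fun k => hruss k k.2) hξ
  rintro ξ' ⟨hξ'B, hξ'⟩
  exact hfiber ξ' hξ'B (fun k hk h0 => hξ' (mem_iUnion.mpr ⟨⟨k, hk⟩, h0⟩)) x y

/-- Action-angle formulation: if `F` is Rüssmann non-degenerate over the integer lattice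
on the open set `B`, then any `C¹` function `A(x, ξ)`, `ℤ^d`-periodic in the angle
variable `x` and Poisson-commuting with the Hamiltonian `H(x,ξ) = F(ξ)`, is constant
along the fibers `ξ = const`. -/
theorem commuting_implies_constant_on_fibers (d : ℕ) (hd : 1 ≤ d)
    (F : EuclideanSpace ℝ (Fin d) → ℝ) (hF : ContDiff ℝ 1 F)
    (B : Set (EuclideanSpace ℝ (Fin d))) (hB : IsOpen B)
    (hruss : ∀ k : Fin d → ℤ, k ≠ 0 →
        interior {ξ ∈ B | fderiv ℝ F ξ (WithLp.toLp 2 (fun i => (k i : ℝ))) = 0} = ∅)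
    (A : EuclideanSpace ℝ (Fin d) × EuclideanSpace ℝ (Fin d) → ℝ)
    (hA : ContDiff ℝ 1 A)
    (hper : ∀ m : Fin d → ℤ, ∀ x ξ : EuclideanSpace ℝ (Fin d),
        A (x + (show EuclideanSpace ℝ (Fin d) from WithLp.toLp 2 (fun i => (m i : ℝ))), ξ) = A (x, ξ))
    (hcomm : ∀ x : EuclideanSpace ℝ (Fin d), ∀ ξ ∈ B,
        fderiv ℝ (fun y => A (y, ξ)) x (gradient F ξ) = 0) :
    ∀ x y : EuclideanSpace ℝ (Fin d), ∀ ξ ∈ B, A (x, ξ) = A (y, ξ) :=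
  commuting_implies_constant_on_fibers_general d F hF B hB hruss A hA hper hcomm
end

section
/- Let F : E → ℝ be given by F(ξ) = ‖ξ‖. Then at every ξ ≠ 0, Condition Iso-energetic holds but Condition Kolmogorov fails; indeed F''(ξ) ξ = 0 while ξ ≠ 0. -/
open Real InnerProductSpace

lemma hasFDerivAt_norm' {E : Type*} [NormedAddCommGroup E] [InnerProductSpace ℝ E]
    {x : E} (hx : x ≠ 0) :
    HasFDerivAt (fun y : E => ‖y‖) (‖x‖⁻¹ • innerSL ℝ x) x := by
  have h1 : HasFDerivAt (fun y : E => ‖y‖ ^ 2) (2 • innerSL ℝ x) x :=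
    (hasFDerivAt_id x).norm_sq
  have hnorm : (0:ℝ) < ‖x‖ := norm_pos_iff.mpr hx
  have h2 : HasDerivAt Real.sqrt (1 / (2 * Real.sqrt (‖x‖ ^ 2))) (‖x‖ ^ 2) := by
    apply Real.hasDerivAt_sqrt; positivity
  have : HasFDerivAt (fun y : E => Real.sqrt (‖y‖ ^ 2))
      ((1 / (2 * Real.sqrt (‖x‖ ^ 2))) • (2 • innerSL ℝ x)) x := h2.comp_hasFDerivAt x h1
  convert this using 1
  · funext y; simp [Real.sqrt_sq (norm_nonneg y)]
  · rw [Real.sqrt_sq (norm_nonneg x)]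
    ext y
    simp only [ContinuousLinearMap.coe_smul', Pi.smul_apply, smul_eq_mul]
    field_simp
    ring


noncomputable def rinnerSL (E : Type*) [NormedAddCommGroup E] [InnerProductSpace ℝ E] :
    E →L[ℝ] E →L[ℝ] ℝ := innerSL ℝ

@[simp] lemma rinnerSL_apply {E : Type*} [NormedAddCommGroup E] [InnerProductSpace ℝ E]
    (x y : E) : rinnerSL E x y = ⟪x, y⟫_ℝ := rfl

set_option maxHeartbeats 1000000 in
/-- For `F(ξ) = ‖ξ‖` and any `ξ ≠ 0`, Condition Iso-energetic holds at `ξ` but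
Condition Kolmogorov fails there: indeed `F''(ξ) ξ = 0` while `ξ ≠ 0`. -/
theorem isoenergetic_not_kolmogorov_of_norm (d : ℕ) (hd : 1 ≤ d)
    (F : EuclideanSpace ℝ (Fin d) → ℝ) (hFdef : ∀ ξ, F ξ = ‖ξ‖)
    (ξ : EuclideanSpace ℝ (Fin d)) (hξ : ξ ≠ 0) :
    (∀ X : EuclideanSpace ℝ (Fin d), fderiv ℝ F ξ X = 0 →
        fderiv ℝ (fun η => fderiv ℝ F η) ξ X ∈ Submodule.span ℝ {fderiv ℝ F ξ} → X = 0) ∧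
    ¬ (∀ X : EuclideanSpace ℝ (Fin d),
        fderiv ℝ (fun η => fderiv ℝ F η) ξ X = 0 → X = 0) ∧
    fderiv ℝ (fun η => fderiv ℝ F η) ξ ξ = 0 := by
  have hF : F = fun η : EuclideanSpace ℝ (Fin d) => ‖η‖ := funext hFdef
  subst hF
  have hnorm : (0:ℝ) < ‖ξ‖ := norm_pos_iff.mpr hξ
  -- first derivative
  have hfd1 : fderiv ℝ (fun η : EuclideanSpace ℝ (Fin d) => ‖η‖) ξ = ‖ξ‖⁻¹ • innerSL ℝ ξ :=
    (hasFDerivAt_norm' hξ).fderiv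
  -- second derivative
  have hc : HasFDerivAt (fun η : EuclideanSpace ℝ (Fin d) => ‖η‖⁻¹)
      ((-(‖ξ‖ ^ 2)⁻¹) • (‖ξ‖⁻¹ • innerSL ℝ ξ)) ξ := by
    have := (hasDerivAt_inv hnorm.ne').comp_hasFDerivAt ξ (hasFDerivAt_norm' hξ)
    exact this
  have hf : HasFDerivAt (fun η : EuclideanSpace ℝ (Fin d) => innerSL ℝ η)
      (rinnerSL (EuclideanSpace ℝ (Fin d))) ξ :=
    (rinnerSL (EuclideanSpace ℝ (Fin d))).hasFDerivAt
  have hD : HasFDerivAt (fun η : EuclideanSpace ℝ (Fin d) => ‖η‖⁻¹ • innerSL ℝ η)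
      (‖ξ‖⁻¹ • (rinnerSL (EuclideanSpace ℝ (Fin d)))
        + ((-(‖ξ‖ ^ 2)⁻¹) • (‖ξ‖⁻¹ • innerSL ℝ ξ)).smulRight (innerSL ℝ ξ)) ξ :=
    hc.smul hf
  have heq : (fun η : EuclideanSpace ℝ (Fin d) =>
        fderiv ℝ (fun y : EuclideanSpace ℝ (Fin d) => ‖y‖) η)
      =ᶠ[nhds ξ] (fun η : EuclideanSpace ℝ (Fin d) => ‖η‖⁻¹ • innerSL ℝ η) := by
    filter_upwards [isOpen_compl_singleton.mem_nhds
      (by simpa using hξ : ξ ∈ ({0}ᶜ : Set (EuclideanSpace ℝ (Fin d))))] with η hη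
    exact (hasFDerivAt_norm' hη).fderiv
  have hfd2 : fderiv ℝ (fun η : EuclideanSpace ℝ (Fin d) =>
        fderiv ℝ (fun y : EuclideanSpace ℝ (Fin d) => ‖y‖) η) ξ
      = ‖ξ‖⁻¹ • (rinnerSL (EuclideanSpace ℝ (Fin d)))
        + ((-(‖ξ‖ ^ 2)⁻¹) • (‖ξ‖⁻¹ • innerSL ℝ ξ)).smulRight (innerSL ℝ ξ) := by
    rw [heq.fderiv_eq, hD.fderiv]
  have happ : ∀ X Y : EuclideanSpace ℝ (Fin d),
      fderiv ℝ (fun η : EuclideanSpace ℝ (Fin d) =>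
        fderiv ℝ (fun y : EuclideanSpace ℝ (Fin d) => ‖y‖) η) ξ X Y
        = ‖ξ‖⁻¹ * ⟪X, Y⟫_ℝ - (‖ξ‖ ^ 2)⁻¹ * (‖ξ‖⁻¹ * ⟪ξ, X⟫_ℝ) * ⟪ξ, Y⟫_ℝ := by
    intro X Y
    rw [hfd2]
    simp [ContinuousLinearMap.smulRight_apply, innerSL_apply_apply]
    ring
  have hBξ : fderiv ℝ (fun η : EuclideanSpace ℝ (Fin d) =>
      fderiv ℝ (fun y : EuclideanSpace ℝ (Fin d) => ‖y‖) η) ξ ξ = 0 := by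
    ext Y
    rw [ContinuousLinearMap.zero_apply, happ, real_inner_self_eq_norm_sq]
    field_simp
    ring
  refine ⟨?_, ?_, hBξ⟩
  · intro X hX1 hX2
    have hinner : ⟪ξ, X⟫_ℝ = 0 := by
      rw [hfd1] at hX1
      simpa [inv_eq_zero, hnorm.ne'] using hX1
    rw [Submodule.mem_span_singleton] at hX2
    obtain ⟨a, ha⟩ := hX2
    have h := congrArg (fun f : EuclideanSpace ℝ (Fin d) →L[ℝ] ℝ => f X) ha
    simp only [ContinuousLinearMap.smul_apply, smul_eq_mul] at h
    rw [happ, hfd1] at h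
    simp only [ContinuousLinearMap.smul_apply, innerSL_apply_apply, smul_eq_mul, hinner,
      mul_zero, zero_mul, sub_zero] at h
    rw [real_inner_self_eq_norm_sq] at h
    have hX : ‖X‖ = 0 := by
      have h' : ‖ξ‖⁻¹ * ‖X‖ ^ 2 = 0 := by linarith
      rcases mul_eq_zero.mp h' with h | h
      · exact absurd h (by positivity)
      · nlinarith [norm_nonneg X]
    exact norm_eq_zero.mp hX
  · intro h
    exact hξ (h ξ hBξ)
end

section
/- Let d = 2 and let F : E → ℝ be given by F(ξ) = ξ₁³/3 + ξ₂²/2 (where ξ₁, ξ₂ are the coordinates of ξ). Then Condition Kolmogorov holds at every ξ with ξ₁ ≠ 0, while Condition Iso-energetic fails at every ξ with ξ₁ ≠ 0 and ξ₁³ + 2 ξ₂² = 0 (for instance at ξ = (-2, 2)), i.e. at such ξ there exists a nonzero X : E with F'(ξ) X = 0 and F''(ξ) X ∈ ℝ ∙ F'(ξ). -/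
noncomputable section

abbrev E2 := EuclideanSpace ℝ (Fin 2)

noncomputable def p0 : E2 →L[ℝ] ℝ := EuclideanSpace.proj (0 : Fin 2)
noncomputable def p1 : E2 →L[ℝ] ℝ := EuclideanSpace.proj (1 : Fin 2)

noncomputable def Dmap (η : E2) : E2 →L[ℝ] ℝ := (η 0) ^ 2 • p0 + (η 1) • p1

noncomputable def D2map (ξ : E2) : E2 →L[ℝ] (E2 →L[ℝ] ℝ) :=
  ((2 * ξ 0) • p0).smulRight p0 + p1.smulRight p1

lemma hasFDeriv_F (η : E2) :
    HasFDerivAt (fun ξ : E2 => (ξ 0) ^ 3 / 3 + (ξ 1) ^ 2 / 2) (Dmap η) η := by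
  have h0 : HasFDerivAt (fun ξ : E2 => (ξ 0) ^ 3 / 3) ((η 0) ^ 2 • p0) η := by
    have hd : HasDerivAt (fun t : ℝ => t ^ 3 / 3) ((η 0) ^ 2) (η 0) := by
      have := (hasDerivAt_pow 3 (η 0)).div_const 3
      refine this.congr_deriv ?_
      ring
    exact hd.comp_hasFDerivAt η (p0.hasFDerivAt)
  have h1 : HasFDerivAt (fun ξ : E2 => (ξ 1) ^ 2 / 2) ((η 1) • p1) η := by
    have hd : HasDerivAt (fun t : ℝ => t ^ 2 / 2) (η 1) (η 1) := by
      have := (hasDerivAt_pow 2 (η 1)).div_const 2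
      refine this.congr_deriv ?_
      ring
    exact hd.comp_hasFDerivAt η (p1.hasFDerivAt)
  exact h0.add h1

lemma hasFDeriv_D (ξ : E2) : HasFDerivAt Dmap (D2map ξ) ξ := by
  have h0 : HasFDerivAt (fun η : E2 => (η 0) ^ 2 • p0)
      (((2 * ξ 0) • p0).smulRight p0) ξ := by
    have hd : HasDerivAt (fun t : ℝ => t ^ 2) (2 * ξ 0) (ξ 0) := by
      have := hasDerivAt_pow 2 (ξ 0)
      refine this.congr_deriv ?_
      ring
    exact (hd.comp_hasFDerivAt ξ p0.hasFDerivAt).smul_const p0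
  have h1 : HasFDerivAt (fun η : E2 => (η 1) • p1) (p1.smulRight p1) ξ :=
    p1.hasFDerivAt.smul_const p1
  exact h0.add h1

/-- For `d = 2` and `F(ξ) = ξ₁³/3 + ξ₂²/2`, Condition Kolmogorov holds wherever
`ξ₁ ≠ 0`, while Condition Iso-energetic fails at every `ξ` with `ξ₁ ≠ 0` and
`ξ₁³ + 2 ξ₂² = 0`. -/
theorem kolmogorov_not_isoenergetic_example
    (F : EuclideanSpace ℝ (Fin 2) → ℝ)
    (hFdef : ∀ ξ : EuclideanSpace ℝ (Fin 2), F ξ = (ξ 0) ^ 3 / 3 + (ξ 1) ^ 2 / 2) :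
    (∀ ξ : EuclideanSpace ℝ (Fin 2), ξ 0 ≠ 0 →
        ∀ X : EuclideanSpace ℝ (Fin 2),
          fderiv ℝ (fun η => fderiv ℝ F η) ξ X = 0 → X = 0) ∧
    (∀ ξ : EuclideanSpace ℝ (Fin 2), ξ 0 ≠ 0 → (ξ 0) ^ 3 + 2 * (ξ 1) ^ 2 = 0 →
        ∃ X : EuclideanSpace ℝ (Fin 2), X ≠ 0 ∧ fderiv ℝ F ξ X = 0 ∧
          fderiv ℝ (fun η => fderiv ℝ F η) ξ X ∈ Submodule.span ℝ {fderiv ℝ F ξ}) := by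
  have hF : F = fun ξ => (ξ 0) ^ 3 / 3 + (ξ 1) ^ 2 / 2 := funext hFdef
  subst hF
  have hfd : ∀ η : E2, fderiv ℝ (fun ξ : E2 => (ξ 0) ^ 3 / 3 + (ξ 1) ^ 2 / 2) η = Dmap η :=
    fun η => (hasFDeriv_F η).fderiv
  have hfun : (fun η : E2 => fderiv ℝ (fun ξ : E2 => (ξ 0) ^ 3 / 3 + (ξ 1) ^ 2 / 2) η) = Dmap :=
    funext hfd
  have hfd2 : ∀ ξ : E2,
      fderiv ℝ (fun η : E2 => fderiv ℝ (fun ξ : E2 => (ξ 0) ^ 3 / 3 + (ξ 1) ^ 2 / 2) η) ξ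
        = D2map ξ := by
    intro ξ
    rw [hfun]
    exact (hasFDeriv_D ξ).fderiv
  constructor
  · intro ξ hξ X hX
    rw [hfd2] at hX
    have h0 : (D2map ξ X) (EuclideanSpace.single 0 1) = 0 := by rw [hX]; simp
    have h1 : (D2map ξ X) (EuclideanSpace.single 1 1) = 0 := by rw [hX]; simp
    simp [D2map, p0, p1, EuclideanSpace.single_apply] at h0 h1
    have hX0 : X 0 = 0 := h0.resolve_left hξ
    ext i
    fin_cases i
    · exact hX0
    · exact h1
  · intro ξ hξ hiso
    refine ⟨EuclideanSpace.single 0 (ξ 1) + EuclideanSpace.single 1 (-(ξ 0) ^ 2), ?_, ?_, ?_⟩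
    · intro h
      have := congrFun (congrArg (fun v : E2 => (v : Fin 2 → ℝ)) h) 1
      simp [EuclideanSpace.single_apply] at this
      exact hξ this
    · rw [hfd]
      simp [Dmap, p0, p1, EuclideanSpace.single_apply]
      ring
    · rw [hfd2, hfd]
      rw [Submodule.mem_span_singleton]
      refine ⟨2 * ξ 1 / ξ 0, ?_⟩
      ext v
      simp [D2map, Dmap, p0, p1, EuclideanSpace.single_apply]
      field_simp
      have hξ1sq : 2 * (ξ 1) ^ 2 = -(ξ 0) ^ 3 := by linarith
      linear_combination v 1 * hξ1sq
end
end

section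
/- Let d : ℕ with 1 ≤ d, let A : Matrix (Fin d) (Fin d) ℝ and let v : Fin d → ℝ be nonzero. Then the determinant of the (d+1) × (d+1) bordered matrix Matrix.fromBlocks A (Matrix.col v) (Matrix.row v) 0 is nonzero if and only if every X : Fin d → ℝ with v ⬝ᵥ X = 0 and A.mulVec X ∈ ℝ ∙ v (i.e. there exists c : ℝ with A.mulVec X = c • v) satisfies X = 0. (This is the equivalence between the geometric Iso-energetic condition and its usual bordered-Hessian determinant formulation in action coordinates.) -/
/-!
A kernel vector `(X, t)` of the bordered matrix `[[A, u], [wᵀ, 0]]` is exactly a solution of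
`A X = -t u`, `w ⬝ᵥ X = 0`. So a nonzero kernel vector yields a nonzero `X` of the required kind,
unless `X = 0`, in which case `t u = 0` with `u ≠ 0` forces `t = 0`.
-/

open Matrix

namespace Matrix

variable {n R : Type*} [Fintype n]

theorem fromBlocks_replicateCol_replicateRow_mulVec_sumElim [CommRing R] (A : Matrix n n R)
    (u w X : n → R) (t : R) :
    fromBlocks A (replicateCol Unit u) (replicateRow Unit w) 0 *ᵥ Sum.elim X (fun _ => t) =
      Sum.elim (A *ᵥ X + t • u) (fun _ => w ⬝ᵥ X) := by
  ext (i | i) <;> simp [mulVec, dotProduct, mul_comm]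

theorem fromBlocks_replicateCol_replicateRow_mulVec_sumElim_eq_zero_iff [CommRing R]
    (A : Matrix n n R) (u w X : n → R) (t : R) :
    fromBlocks A (replicateCol Unit u) (replicateRow Unit w) 0 *ᵥ Sum.elim X (fun _ => t) = 0 ↔
      A *ᵥ X + t • u = 0 ∧ w ⬝ᵥ X = 0 := by
  rw [fromBlocks_replicateCol_replicateRow_mulVec_sumElim, ← Sum.elim_zero_zero]
  simp [funext_iff]

theorem det_fromBlocks_replicateCol_replicateRow_ne_zero_iff [CommRing R] [IsDomain R]
    [DecidableEq n] (A : Matrix n n R) (u w : n → R) (hu : u ≠ 0) :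
    (fromBlocks A (replicateCol Unit u) (replicateRow Unit w) 0).det ≠ 0 ↔
      ∀ X : n → R, w ⬝ᵥ X = 0 → (∃ c : R, A *ᵥ X = c • u) → X = 0 := by
  constructor
  · rintro hdet X hwX ⟨c, hc⟩
    by_contra hX
    refine hdet (exists_mulVec_eq_zero_iff.1 ⟨Sum.elim X (fun _ => -c), ?_, ?_⟩)
    · exact fun h => hX (funext fun i => congrFun h (Sum.inl i))
    · simp [fromBlocks_replicateCol_replicateRow_mulVec_sumElim_eq_zero_iff, hc, hwX]
  · rintro h hdet
    obtain ⟨Y, hY0, hY⟩ := exists_mulVec_eq_zero_iff.2 hdet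
    obtain ⟨X, t, rfl⟩ : ∃ X t, Y = Sum.elim X (fun _ => t) :=
      ⟨Y ∘ Sum.inl, Y (Sum.inr ()), by ext (i | i) <;> rfl⟩
    obtain ⟨hAX, hwX⟩ := (fromBlocks_replicateCol_replicateRow_mulVec_sumElim_eq_zero_iff ..).1 hY
    have hX : X = 0 := h X hwX ⟨-t, by rw [neg_smul]; exact eq_neg_of_add_eq_zero_left hAX⟩
    have ht : t = 0 := by simpa [hX, hu] using hAX
    exact hY0 (by rw [hX, ht]; exact Sum.elim_zero_zero)

end Matrix

theorem bordered_det_iff_isoenergetic_general (d : ℕ)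
    (A : Matrix (Fin d) (Fin d) ℝ) (v : Fin d → ℝ) (hv : v ≠ 0) :
    (Matrix.fromBlocks A (Matrix.replicateCol Unit v) (Matrix.replicateRow Unit v) 0).det ≠ 0 ↔
    (∀ X : Fin d → ℝ, v ⬝ᵥ X = 0 → (∃ c : ℝ, A.mulVec X = c • v) → X = 0) :=
  det_fromBlocks_replicateCol_replicateRow_ne_zero_iff A v v hv

/-- The bordered-determinant formulation of the Iso-energetic condition: for a matrix `A`
and a nonzero vector `v`, the determinant of the bordered matrix `[[A, v], [vᵀ, 0]]` is
nonzero iff every `X` with `v ⬝ᵥ X = 0` and `A.mulVec X ∈ ℝ ∙ v` vanishes. -/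
theorem bordered_det_iff_isoenergetic (d : ℕ) (hd : 1 ≤ d)
    (A : Matrix (Fin d) (Fin d) ℝ) (v : Fin d → ℝ) (hv : v ≠ 0) :
    (Matrix.fromBlocks A (Matrix.replicateCol Unit v) (Matrix.replicateRow Unit v) 0).det ≠ 0 ↔
    (∀ X : Fin d → ℝ, v ⬝ᵥ X = 0 → (∃ c : ℝ, A.mulVec X = c • v) → X = 0) :=
  bordered_det_iff_isoenergetic_general d A v hv
end
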